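/- Let d ≥ 2 be an integer and α > d − 2. Then U = (1/d, …, 1/d) is a local minimum of g on the open simplex: there exists ε > 0 such that g(u) ≥ 0 for every u ∈ Δ° with ‖u − U‖₁ < ε; moreover g(U) = 0. -/

import Mathlib

open Finset

/-- The function `g` of Lemma 4: `g(u) = 2 min u − d (min u)² − (∑ u_i^{−α})/(∑ u_i^{−(1+α)})`. -/
noncomputable def gfun (d : ℕ) (α : ℝ) (u : Fin d → ℝ) : ℝ :=
  2 * (⨅ i, u i) - d * (⨅ i, u i) ^ 2 -
    (∑ i, u i ^ (-α)) / (∑ i, u i ^ (-(1 + α)))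

/-!
Write `t = u − U`, `s = min t` and `δ = ‖t‖₁`. Since `2m − d m² = 1/d − d s²` for `m = min u`,
`g(u) ≥ 0` amounts to `∑ (tᵢ + d s²) uᵢ^{-(1+α)} ≤ 0`. Expanding `x^{-(1+α)}` at `1/d` to first
order with a quadratic remainder, and using `∑ tᵢ = 0`, this sum is
`A d² s² + D ∑ tᵢ² + O(δ ∑ tᵢ²)` with `A = d^{1+α}` and `D = -(1+α) d^{2+α}`. By Cauchy–Schwarz,
`d s² ≤ (d − 1) ∑ tᵢ²`, so the sum is at most `(d^{2+α} (d − 2 − α) + O(δ)) ∑ tᵢ²`, which is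
nonpositive for small `δ` precisely because `α > d − 2`.
-/

open Asymptotics Filter Topology

theorem gfun_eq_neg_sum_div {d : ℕ} [NeZero d] (α : ℝ) {u : Fin d → ℝ} (hu : ∀ i, 0 < u i) :
    gfun d α u = -(∑ i, (u i - 1 / d + d * ((⨅ i, u i) - 1 / d) ^ 2) * u i ^ (-(1 + α))) /
      ∑ i, u i ^ (-(1 + α)) := by
  have hS : 0 < ∑ i, u i ^ (-(1 + α)) :=
    sum_pos (fun i _ ↦ Real.rpow_pos_of_pos (hu i) _) univ_nonempty
  have hpow (i : Fin d) : u i ^ (-α) = u i * u i ^ (-(1 + α)) := by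
    rw [show -α = -(1 + α) + 1 by ring, Real.rpow_add_one (hu i).ne', mul_comm]
  have hd : (d : ℝ) ≠ 0 := NeZero.ne _
  set m := ⨅ i, u i
  have hterm (i : Fin d) : (u i - 1 / d + d * (m - 1 / d) ^ 2) * u i ^ (-(1 + α)) =
      u i * u i ^ (-(1 + α)) - (2 * m - d * m ^ 2) * u i ^ (-(1 + α)) := by
    field_simp
    ring
  simp only [gfun, hpow, hterm, sum_sub_distrib, ← mul_sum]
  field_simp
  ring

theorem card_mul_sq_le_of_sum_eq_zero {ι : Type*} [Fintype ι] {t : ι → ℝ}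
    (ht : ∑ i, t i = 0) (j : ι) :
    Fintype.card ι * t j ^ 2 ≤ (Fintype.card ι - 1) * ∑ i, t i ^ 2 := by
  classical
  have hcs := sq_sum_le_card_mul_sum_sq (s := univ.erase j) (f := t)
  rw [sum_erase_eq_sub (mem_univ j), sum_erase_eq_sub (mem_univ j), ht,
    card_erase_of_mem (mem_univ j), card_univ, Nat.cast_sub (Fintype.card_pos_iff.mpr ⟨j⟩)] at hcs
  push_cast at hcs
  nlinarith

theorem sum_add_mul_le_of_abs_sub_le {ι : Type*} [Fintype ι] {t w : ι → ℝ}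
    {A D C δ : ℝ} (j : ι) (ht : ∑ i, t i = 0) (hA : 0 ≤ A) (htδ : ∀ i, |t i| ≤ δ)
    (hδ : Fintype.card ι * δ ≤ 1) (hw : ∀ i, |w i - A - D * t i| ≤ C * t i ^ 2) :
    ∑ i, (t i + Fintype.card ι * t j ^ 2) * w i ≤
      (A * Fintype.card ι * (Fintype.card ι - 1) + D + 2 * C * δ) * ∑ i, t i ^ 2 := by
  set n : ℝ := (Fintype.card ι : ℝ)
  have hδ0 : 0 ≤ δ := (abs_nonneg _).trans (htδ j)
  have hsum_coef : ∑ i, (t i + n * t j ^ 2) = n * (n * t j ^ 2) := by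
    simp [n, sum_add_distrib, ht]
  have hsum_sq : ∑ i, (t i + n * t j ^ 2) * t i = ∑ i, t i ^ 2 := by
    simp only [add_mul, sum_add_distrib, ← mul_sum, ht, mul_zero, add_zero, sq]
  have hcoef (i : ι) : |t i + n * t j ^ 2| ≤ 2 * δ := by
    have hsq : t j ^ 2 ≤ δ ^ 2 := sq_le_sq' (abs_le.mp (htδ j)).1 (abs_le.mp (htδ j)).2
    have hsmall : n * t j ^ 2 ≤ δ :=
      calc n * t j ^ 2 ≤ n * δ ^ 2 := by gcongr
        _ = n * δ * δ := by ring
        _ ≤ δ := mul_le_of_le_one_left hδ0 hδ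
    calc |t i + n * t j ^ 2| ≤ |t i| + |n * t j ^ 2| := abs_add_le _ _
      _ ≤ δ + δ := by
        gcongr
        · exact htδ i
        · rwa [abs_of_nonneg (by positivity)]
      _ = 2 * δ := by ring
  have hrem : ∑ i, (t i + n * t j ^ 2) * (w i - A - D * t i) ≤ 2 * C * δ * ∑ i, t i ^ 2 := by
    rw [mul_sum]
    refine sum_le_sum fun i _ ↦ ?_
    calc (t i + n * t j ^ 2) * (w i - A - D * t i)
        ≤ |t i + n * t j ^ 2| * |w i - A - D * t i| := (le_abs_self _).trans (abs_mul _ _).le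
      _ ≤ 2 * δ * (C * t i ^ 2) := mul_le_mul (hcoef i) (hw i) (abs_nonneg _) (by positivity)
      _ = 2 * C * δ * t i ^ 2 := by ring
  calc ∑ i, (t i + n * t j ^ 2) * w i
      = A * (n * (n * t j ^ 2)) + D * ∑ i, t i ^ 2
          + ∑ i, (t i + n * t j ^ 2) * (w i - A - D * t i) := by
        rw [← hsum_coef, ← hsum_sq, mul_sum, mul_sum, ← sum_add_distrib, ← sum_add_distrib]
        exact sum_congr rfl fun i _ ↦ by ring
    _ ≤ A * (n * ((n - 1) * ∑ i, t i ^ 2)) + D * ∑ i, t i ^ 2 + 2 * C * δ * ∑ i, t i ^ 2 := by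
        gcongr A * (n * ?_) + _ + ?_
        exact card_mul_sq_le_of_sum_eq_zero ht j
    _ = (A * n * (n - 1) + D + 2 * C * δ) * ∑ i, t i ^ 2 := by ring

theorem isBigO_sub_sub_deriv_mul_sq {f f' : ℝ → ℝ} {a : ℝ}
    (hf : ∀ᶠ x in 𝓝 a, HasDerivAt f (f' x) x) (hf' : DifferentiableAt ℝ f' a) :
    (fun x ↦ f x - f a - f' a * (x - a)) =O[𝓝 a] fun x ↦ (x - a) ^ 2 := by
  obtain ⟨c, hc0, hc⟩ := hf'.hasDerivAt.isBigO_sub.exists_nonneg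
  obtain ⟨ε, hε, hball⟩ := Metric.eventually_nhds_iff_ball.mp (hf.and hc.bound)
  refine IsBigO.of_bound c ?_
  filter_upwards [Metric.ball_mem_nhds a hε] with x hx
  set B := Metric.closedBall a (dist x a)
  have hB : B ⊆ Metric.ball a ε := Metric.closedBall_subset_ball (Metric.mem_ball.mp hx)
  have hderiv (z : ℝ) (hz : z ∈ B) :
      HasDerivWithinAt (fun z ↦ f z - f' a * z) (f' z - f' a) B z := by
    have h := (hball z (hB hz)).1.sub ((hasDerivAt_id' z).const_mul (f' a))
    rw [mul_one] at h
    exact h.hasDerivWithinAt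
  have hbound (z : ℝ) (hz : z ∈ B) : ‖f' z - f' a‖ ≤ c * dist x a :=
    (hball z (hB hz)).2.trans (mul_le_mul_of_nonneg_left hz hc0)
  have hmvt := (convex_closedBall a (dist x a)).norm_image_sub_le_of_norm_hasDerivWithin_le
    hderiv hbound (Metric.mem_closedBall_self dist_nonneg) (Metric.mem_closedBall.mpr le_rfl)
  simp only [Real.norm_eq_abs, Real.dist_eq] at hmvt ⊢
  convert hmvt using 1
  · ring_nf
  · rw [mul_assoc, abs_mul_abs_self, abs_of_nonneg (sq_nonneg _), sq]

theorem exists_abs_rpow_sub_sub_le (p : ℝ) {a : ℝ} (ha : 0 < a) :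
    ∃ C > 0, ∃ r > 0, ∀ x, |x - a| < r →
      |x ^ p - a ^ p - p * a ^ (p - 1) * (x - a)| ≤ C * (x - a) ^ 2 := by
  have hderiv : ∀ᶠ x in 𝓝 a, HasDerivAt (fun x ↦ x ^ p) (p * x ^ (p - 1)) x :=
    (eventually_gt_nhds ha).mono fun x hx ↦ Real.hasDerivAt_rpow_const (Or.inl hx.ne')
  have hderiv' : DifferentiableAt ℝ (fun x ↦ p * x ^ (p - 1)) a :=
    (Real.hasDerivAt_rpow_const (Or.inl ha.ne')).differentiableAt.const_mul p
  obtain ⟨C, hC, hbound⟩ := (isBigO_sub_sub_deriv_mul_sq hderiv hderiv').exists_pos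
  obtain ⟨r, hr, hball⟩ := Metric.eventually_nhds_iff_ball.mp hbound.bound
  refine ⟨C, hC, r, hr, fun x hx ↦ ?_⟩
  have := hball x (by rwa [Metric.mem_ball, Real.dist_eq])
  rwa [Real.norm_eq_abs, Real.norm_eq_abs, abs_of_nonneg (sq_nonneg (x - a))] at this

/-- Lemma 4: for `d ≥ 2` and `α > d − 2`, the uniform distribution
`U = (1/d, …, 1/d)` is a local minimum of `g` on the open simplex, and `g(U) = 0`. -/
theorem stmt_12 (d : ℕ) (hd : 2 ≤ d) (α : ℝ) (hα : (d : ℝ) - 2 < α) :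
    (∃ ε > 0, ∀ u : Fin d → ℝ, (∀ i, 0 < u i) → ∑ i, u i = 1 →
        ∑ i, |u i - 1 / d| < ε → 0 ≤ gfun d α u) ∧
      gfun d α (fun _ => 1 / d) = 0 := by
  have : NeZero d := ⟨by omega⟩
  set a : ℝ := 1 / d
  have ha : 0 < a := by positivity
  set p := -(1 + α) with hp
  obtain ⟨C, hC, r, hr, htaylor⟩ := exists_abs_rpow_sub_sub_le p ha
  set B := a ^ (p - 1) * (α - (d - 2))
  have hB : 0 < B := mul_pos (Real.rpow_pos_of_pos ha _) (by linarith)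
  have hcoef : a ^ p * d * (d - 1) + p * a ^ (p - 1) = -B := by
    rw [show a ^ p = a ^ (p - 1) * a by rw [← Real.rpow_add_one ha.ne']; ring_nf]
    have had : a * d = 1 := one_div_mul_cancel (NeZero.ne _)
    linear_combination (a ^ (p - 1) * (d - 1)) * had + a ^ (p - 1) * hp
  refine ⟨⟨min r (min a (B / (2 * C))), by positivity, fun u hu hsum hδ ↦ ?_⟩, ?_⟩
  · set δ := ∑ i, |u i - a|
    have htδ (i : Fin d) : |u i - a| ≤ δ :=
      single_le_sum (f := fun i ↦ |u i - a|) (fun j _ ↦ abs_nonneg _) (mem_univ i)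
    have ht : ∑ i, (u i - a) = 0 := by simp [sum_sub_distrib, hsum, a]
    obtain ⟨hδr, hδa, hδB⟩ : δ < r ∧ δ < 1 / d ∧ δ < B / (2 * C) := by
      simpa only [lt_min_iff] using hδ
    have hdδ : d * δ ≤ 1 := ((lt_div_iff₀' (by positivity)).mp hδa).le
    have hCδ : 2 * C * δ ≤ B := ((lt_div_iff₀' (by positivity)).mp hδB).le
    obtain ⟨j, hj⟩ := exists_eq_ciInf_of_finite (f := u)
    have hestimate := sum_add_mul_le_of_abs_sub_le j ht (Real.rpow_pos_of_pos ha p).le htδ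
      (by simpa using hdδ) fun i ↦ htaylor (u i) ((htδ i).trans_lt hδr)
    simp only [Fintype.card_fin, hcoef] at hestimate
    rw [gfun_eq_neg_sum_div α hu, ← hj]
    refine div_nonneg (neg_nonneg.mpr (hestimate.trans ?_)) (sum_nonneg fun i _ ↦ ?_)
    · exact mul_nonpos_of_nonpos_of_nonneg (by linarith) (sum_nonneg fun i _ ↦ sq_nonneg _)
    · exact (Real.rpow_pos_of_pos (hu i) _).le
  · rw [gfun_eq_neg_sum_div α fun _ ↦ ha]
    simp [a]
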